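/- arXiv:1512.05033 — 2 statements merged into one kernel-verified Lean document; each statement's English description precedes it below -/
import Mathlib

section
/- As λ → 0+ the value u(λ) increases monotonically and converges to u, where u is the smallest root of B_c(s) = 0 in [0,1]; in particular lim_{λ→0+} u(λ) = 1 when ∑_{j≥2} (j−1) b_j ≤ c·b_0, and lim_{λ→0+} u(λ) = u < 1 when ∑_{j≥2} (j−1) b_j > c·b_0 (the sums taken in [0,+∞]). -/
/-!
On `[0, 1]` the function `B_c` is convex, since its coefficients of degree `≥ 2` are nonnegative;
moreover `B_c 0 = c b₀ > 0` and `B_c 1 = 0`. For `λ > 0` the convex function `B_c(s) - λ s`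
vanishes at `u(λ)` and is negative at `1`, so it is positive to the left of `u(λ)` and negative
between `u(λ)` and `1`. Comparing two values of `λ` gives monotonicity, and since `B_c > 0` on
`[0, u)` this squeezes `u(λ)` up to the least root `u`.

Using `∑ b_j = 0`, for `s < 1` one has `B_c(s) = (1 - s) (c b₀ - ∑_{j ≥ 2} b_j (s + ⋯ + s^{j-1}))`,
and the sum increases to `∑_{j ≥ 2} (j - 1) b_j` as `s → 1`; this decides whether `B_c` has a root
in `(0, 1)`.
-/

open Set Filter Topology
open scoped ENNReal

/-- The generating function `B_i(s) = ∑_{j≥0} b_j s^j + (i-1) b_0 (1-s)`. -/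
noncomputable def Bi (b : ℕ → ℝ) (i : ℕ) (s : ℝ) : ℝ :=
  (∑' j : ℕ, b j * s ^ j) + ((i : ℝ) - 1) * b 0 * (1 - s)

theorem ConvexOn.tsum {ι E : Type*} [AddCommGroup E] [Module ℝ E] {S : Set E}
    {f : ι → E → ℝ} (hS : Convex ℝ S) (hf : ∀ i, ConvexOn ℝ S (f i))
    (hsum : ∀ x ∈ S, Summable fun i => f i x) :
    ConvexOn ℝ S fun x => ∑' i, f i x := by
  refine ⟨hS, fun x hx y hy a b ha hb hab => ?_⟩
  have hx' := (hsum x hx).mul_left a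
  have hy' := (hsum y hy).mul_left b
  calc ∑' i, f i (a • x + b • y) ≤ ∑' i, (a * f i x + b * f i y) :=
        (hsum _ (hS hx hy ha hb hab)).tsum_le_tsum (fun i => (hf i).2 hx hy ha hb hab)
          (hx'.add hy')
    _ = a • ∑' i, f i x + b • ∑' i, f i y := by
        rw [hx'.tsum_add hy', tsum_mul_left, tsum_mul_left, smul_eq_mul, smul_eq_mul]

theorem convexOn_mul_add {S : Set ℝ} (hS : Convex ℝ S) (p q : ℝ) :
    ConvexOn ℝ S fun s => p * s + q :=
  ⟨hS, fun x _ y _ a b _ _ hab => le_of_eq <| by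
    simp only [smul_eq_mul]; linear_combination (-q) * hab⟩

section ConvexSign

variable {S : Set ℝ} {f : ℝ → ℝ} {v w x : ℝ}

theorem ConvexOn.lt_of_pos_of_apply_eq_zero (hf : ConvexOn ℝ S f) (hv : v ∈ S) (hw : w ∈ S)
    (hfv : f v = 0) (hfw : f w ≤ 0) (hxw : x ≤ w) (hfx : 0 < f x) : x < v := by
  by_contra! hvx
  have := hf.le_on_segment hv hw (by rw [segment_eq_Icc (hvx.trans hxw)]; exact ⟨hvx, hxw⟩)
  rw [hfv] at this
  exact hfx.not_ge (this.trans (max_le le_rfl hfw))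

theorem ConvexOn.lt_of_neg_of_apply_eq_zero (hf : ConvexOn ℝ S f) (hx : x ∈ S) (hw : w ∈ S)
    (hfv : f v = 0) (hfw : f w < 0) (hvw : v ≤ w) (hfx : f x < 0) : v < x := by
  by_contra! hxv
  have := hf.le_on_segment hx hw (by rw [segment_eq_Icc (hxv.trans hvw)]; exact ⟨hxv, hvw⟩)
  rw [hfv] at this
  exact (max_lt hfx hfw).not_ge this

end ConvexSign

section LeastZero

variable {f : ℝ → ℝ} {a b : ℝ}

theorem exists_isLeast_zero (hf : ContinuousOn f (Icc a b)) (hab : a ≤ b) (hfb : f b = 0) :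
    ∃ x, IsLeast {x ∈ Icc a b | f x = 0} x :=
  ⟨_, (hf.preimage_isClosed_of_isClosed isClosed_Icc isClosed_singleton).isLeast_csInf
    ⟨b, ⟨hab, le_rfl⟩, hfb⟩ ⟨a, fun _ hx => hx.1.1⟩⟩

theorem pos_of_lt_of_isLeast_zero {x₀ x : ℝ} (h : IsLeast {x ∈ Icc a b | f x = 0} x₀)
    (hf : ContinuousOn f (Icc a b)) (hfa : 0 < f a) (hax : a ≤ x) (hx : x < x₀) : 0 < f x := by
  by_contra! hfx
  have hxb : x ≤ b := hx.le.trans h.1.1.2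
  obtain ⟨r, hr, hfr⟩ :=
    intermediate_value_Icc' hax (hf.mono (Icc_subset_Icc_right hxb)) ⟨hfx, hfa.le⟩
  exact (h.2 ⟨⟨hr.1, hr.2.trans hxb⟩, hfr⟩).not_gt (hr.2.trans_lt hx)

end LeastZero

theorem ENNReal.tsum_ofReal_le_ofReal_iff {g : ℕ → ℝ} {r : ℝ} (hg : ∀ j, 0 ≤ g j) (hr : 0 ≤ r) :
    ∑' j, ENNReal.ofReal (g j) ≤ ENNReal.ofReal r ↔ ∀ N, ∑ j ∈ Finset.range N, g j ≤ r := by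
  simp only [ENNReal.tsum_eq_iSup_nat, iSup_le_iff,
    ← ENNReal.ofReal_sum_of_nonneg fun j _ => hg j, ENNReal.ofReal_le_ofReal_iff hr]

section PowerSeries

variable {b : ℕ → ℝ}

theorem norm_mul_pow_le_abs {s : ℝ} (hs : |s| ≤ 1) (j : ℕ) : ‖b j * s ^ j‖ ≤ |b j| := by
  rw [norm_mul, norm_pow, Real.norm_eq_abs, Real.norm_eq_abs]
  exact mul_le_of_le_one_right (abs_nonneg _) (pow_le_one₀ (abs_nonneg _) hs)

theorem summable_mul_pow (hb : Summable b) {s : ℝ} (hs : |s| ≤ 1) :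
    Summable fun j => b j * s ^ j :=
  hb.abs.of_norm_bounded (norm_mul_pow_le_abs hs)

theorem continuousOn_tsum_mul_pow (hb : Summable b) :
    ContinuousOn (fun s => ∑' j, b j * s ^ j) (Icc (-1) 1) :=
  continuousOn_tsum (fun _ => by fun_prop) hb.abs fun _ _ hs => norm_mul_pow_le_abs (abs_le.2 hs) _

theorem convexOn_tsum_mul_pow (hb : Summable b) (hbnn : ∀ j, j ≠ 1 → 0 ≤ b j) :
    ConvexOn ℝ (Icc 0 1) fun s => ∑' j, b j * s ^ j := by
  refine ConvexOn.tsum (convex_Icc 0 1) (fun j => ?_) fun s hs =>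
    summable_mul_pow hb (abs_le.2 ⟨by linarith [hs.1], hs.2⟩)
  rcases eq_or_ne j 1 with rfl | hj
  · simpa using convexOn_mul_add (convex_Icc (0 : ℝ) 1) (b 1) 0
  · exact ((convexOn_pow j).subset Icc_subset_Ici_self (convex_Icc 0 1)).smul (hbnn j hj)

end PowerSeries

/-- `slopeSum b s - c * b 0` is the slope of the chord of `Bi b c` from `s` to `1`. -/
noncomputable def slopeSum (b : ℕ → ℝ) (s : ℝ) : ℝ :=
  ∑' j, b (j + 2) * (s * ∑ k ∈ Finset.range (j + 1), s ^ k)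

section SlopeSum

variable {b : ℕ → ℝ} {s : ℝ}

theorem one_sub_mul_mul_geom_sum (s : ℝ) (n : ℕ) :
    (1 - s) * (s * ∑ k ∈ Finset.range n, s ^ k) = s - s ^ (n + 1) := by
  rw [mul_left_comm, mul_neg_geom_sum]; ring

theorem summable_slopeSum (hb : Summable b) (hs0 : 0 ≤ s) (hs1 : s < 1) :
    Summable fun j => b (j + 2) * (s * ∑ k ∈ Finset.range (j + 1), s ^ k) := by
  refine (((summable_nat_add_iff 2).2 hb).abs.mul_right (1 / (1 - s))).of_norm_bounded
    fun j => ?_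
  have h1s : 0 < 1 - s := by linarith
  have hw : 0 ≤ s * ∑ k ∈ Finset.range (j + 1), s ^ k := by positivity
  rw [norm_mul, Real.norm_eq_abs, Real.norm_eq_abs, abs_of_nonneg hw]
  refine mul_le_mul_of_nonneg_left ((le_div_iff₀ h1s).2 ?_) (abs_nonneg _)
  nlinarith [one_sub_mul_mul_geom_sum s (j + 1), pow_nonneg hs0 (j + 2)]

theorem slopeSum_le (hbnn : ∀ j, j ≠ 1 → 0 ≤ b j) (hs0 : 0 ≤ s) (hs1 : s ≤ 1) {r : ℝ}
    (hr : ∀ N, ∑ j ∈ Finset.range N, ((j : ℝ) + 1) * b (j + 2) ≤ r) :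
    slopeSum b s ≤ s * r := by
  refine Real.tsum_le_of_sum_range_le (fun j => mul_nonneg (hbnn _ (by omega)) (by positivity))
    fun N => ?_
  calc ∑ j ∈ Finset.range N, b (j + 2) * (s * ∑ k ∈ Finset.range (j + 1), s ^ k)
      ≤ ∑ j ∈ Finset.range N, s * (((j : ℝ) + 1) * b (j + 2)) := by
        refine Finset.sum_le_sum fun j _ => ?_
        have hgeom : ∑ k ∈ Finset.range (j + 1), s ^ k ≤ (j : ℝ) + 1 := by
          refine (Finset.sum_le_card_nsmul _ _ 1 fun k _ => pow_le_one₀ hs0 hs1).trans_eq ?_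
          simp
        nlinarith [hbnn (j + 2) (by omega), mul_le_mul_of_nonneg_left hgeom hs0]
    _ ≤ s * r := by rw [← Finset.mul_sum]; exact mul_le_mul_of_nonneg_left (hr N) hs0

theorem exists_lt_slopeSum (hb : Summable b) (hbnn : ∀ j, j ≠ 1 → 0 ≤ b j) {r : ℝ} {N : ℕ}
    (hr : r < ∑ j ∈ Finset.range N, ((j : ℝ) + 1) * b (j + 2)) :
    ∃ s ∈ Ioo (0 : ℝ) 1, r < slopeSum b s := by
  set P : ℝ → ℝ := fun s =>
    ∑ j ∈ Finset.range N, b (j + 2) * (s * ∑ k ∈ Finset.range (j + 1), s ^ k)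
  have hP1 : P 1 = ∑ j ∈ Finset.range N, ((j : ℝ) + 1) * b (j + 2) := by
    simp only [P, one_pow, Finset.sum_const, Finset.card_range]
    exact Finset.sum_congr rfl fun j _ => by ring
  have hPcont : Continuous P := by fun_prop
  have hnear : ∀ᶠ s in 𝓝[<] 1, r < P s ∧ s ∈ Ioo 0 1 :=
    ((hPcont.tendsto 1).eventually (lt_mem_nhds (hP1 ▸ hr))).filter_mono nhdsWithin_le_nhds
      |>.and (Ioo_mem_nhdsLT zero_lt_one)
  obtain ⟨s, hrs, hs0, hs1⟩ := hnear.exists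
  refine ⟨s, ⟨hs0, hs1⟩, hrs.trans_le ?_⟩
  exact (summable_slopeSum hb hs0.le hs1).sum_le_tsum _
    fun j _ => mul_nonneg (hbnn _ (by omega)) (by positivity)

end SlopeSum

section Bi

variable {b : ℕ → ℝ} {c : ℕ}

theorem Bi_zero : Bi b c 0 = c * b 0 := by
  rw [Bi, tsum_eq_single 0 fun j hj => by simp [zero_pow hj]]; ring

theorem Bi_one (hzero : ∑' j, b j = 0) : Bi b c 1 = 0 := by
  simp [Bi, hzero]

theorem continuousOn_Bi (hb : Summable b) : ContinuousOn (Bi b c) (Icc 0 1) :=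
  ((continuousOn_tsum_mul_pow hb).mono (Icc_subset_Icc_left (by norm_num))).add (by fun_prop)

theorem convexOn_Bi_sub_mul (hb : Summable b) (hbnn : ∀ j, j ≠ 1 → 0 ≤ b j) (lam : ℝ) :
    ConvexOn ℝ (Icc 0 1) fun s => Bi b c s - lam * s := by
  refine ((convexOn_tsum_mul_pow hb hbnn).add
    (convexOn_mul_add (convex_Icc 0 1) (-((c - 1) * b 0) - lam) ((c - 1) * b 0))).congr
    fun s _ => ?_
  simp only [Bi, Pi.add_apply]; ring

theorem Bi_eq_one_sub_mul_slopeSum (hb : Summable b) (hzero : ∑' j, b j = 0) {s : ℝ}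
    (hs0 : 0 ≤ s) (hs1 : s < 1) : Bi b c s = (1 - s) * (c * b 0 - slopeSum b s) := by
  have htail := (summable_nat_add_iff 2).2 hb
  have hslope := summable_slopeSum hb hs0 hs1
  have hsplit := (summable_mul_pow hb (abs_le.2 ⟨by linarith, hs1.le⟩)).sum_add_tsum_nat_add 2
  have hzero' := hb.sum_add_tsum_nat_add 2
  have hterm : ∀ j, b (j + 2) * s ^ (j + 2) =
      s * b (j + 2) - (1 - s) * (b (j + 2) * (s * ∑ k ∈ Finset.range (j + 1), s ^ k)) :=
    fun j => by linear_combination b (j + 2) * one_sub_mul_mul_geom_sum s (j + 1)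
  simp only [Finset.sum_range_succ, Finset.sum_range_zero] at hsplit hzero'
  rw [tsum_congr hterm, (htail.mul_left s).tsum_sub (hslope.mul_left (1 - s)), tsum_mul_left,
    tsum_mul_left] at hsplit
  rw [Bi, ← hsplit, slopeSum]
  linear_combination s * hzero' + s * hzero

theorem Bi_pos_of_tsum_le (hbnn : ∀ j, j ≠ 1 → 0 ≤ b j) (hb : Summable b)
    (hzero : ∑' j, b j = 0) (hcb : 0 < c * b 0)
    (hle : ∑' j : ℕ, ENNReal.ofReal (((j : ℝ) + 1) * b (j + 2)) ≤ ENNReal.ofReal (c * b 0))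
    {s : ℝ} (hs0 : 0 ≤ s) (hs1 : s < 1) : 0 < Bi b c s := by
  rw [ENNReal.tsum_ofReal_le_ofReal_iff (fun j => mul_nonneg (by positivity)
    (hbnn _ (by omega))) hcb.le] at hle
  have := slopeSum_le hbnn hs0 hs1.le hle
  rw [Bi_eq_one_sub_mul_slopeSum hb hzero hs0 hs1]
  exact mul_pos (by linarith) (by nlinarith)

theorem exists_Bi_neg_of_lt_tsum (hbnn : ∀ j, j ≠ 1 → 0 ≤ b j) (hb : Summable b)
    (hzero : ∑' j, b j = 0) (hcb : 0 < c * b 0)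
    (hlt : ENNReal.ofReal (c * b 0) < ∑' j : ℕ, ENNReal.ofReal (((j : ℝ) + 1) * b (j + 2))) :
    ∃ s ∈ Ioo (0 : ℝ) 1, Bi b c s < 0 := by
  rw [← not_le, ENNReal.tsum_ofReal_le_ofReal_iff (fun j => mul_nonneg (by positivity)
    (hbnn _ (by omega))) hcb.le] at hlt
  push Not at hlt
  obtain ⟨N, hN⟩ := hlt
  obtain ⟨s, hs, hlt⟩ := exists_lt_slopeSum hb hbnn hN
  refine ⟨s, hs, ?_⟩
  rw [Bi_eq_one_sub_mul_slopeSum hb hzero hs.1.le hs.2]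
  exact mul_neg_of_pos_of_neg (by linarith [hs.2]) (by linarith)

end Bi

section Root

variable {b : ℕ → ℝ} {c : ℕ} {lam v s : ℝ}

theorem lt_of_mul_lt_Bi (hb : Summable b) (hbnn : ∀ j, j ≠ 1 → 0 ≤ b j)
    (hzero : ∑' j, b j = 0) (hlam : 0 < lam) (hv : v ∈ Icc (0 : ℝ) 1) (hBv : Bi b c v = lam * v)
    (hs1 : s ≤ 1) (h : lam * s < Bi b c s) : s < v :=
  (convexOn_Bi_sub_mul hb hbnn lam).lt_of_pos_of_apply_eq_zero hv (right_mem_Icc.2 zero_le_one)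
    (sub_eq_zero.2 hBv) (by simp only [Bi_one hzero]; linarith) hs1 (by linarith)

theorem lt_of_Bi_lt_mul (hb : Summable b) (hbnn : ∀ j, j ≠ 1 → 0 ≤ b j)
    (hzero : ∑' j, b j = 0) (hlam : 0 < lam) (hv1 : v ≤ 1) (hBv : Bi b c v = lam * v)
    (hs : s ∈ Icc (0 : ℝ) 1) (h : Bi b c s < lam * s) : v < s :=
  (convexOn_Bi_sub_mul hb hbnn lam).lt_of_neg_of_apply_eq_zero hs (right_mem_Icc.2 zero_le_one)
    (sub_eq_zero.2 hBv) (by simp only [Bi_one hzero]; linarith) hv1 (by linarith)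

end Root

theorem stmt6_general (c : ℕ) (hc : 1 ≤ c) (b : ℕ → ℝ)
    (hbnn : ∀ j : ℕ, j ≠ 1 → 0 ≤ b j) (hb0 : 0 < b 0)
    (hbsum : Summable b) (hbzero : (∑' j : ℕ, b j) = 0)
    (u : ℝ → ℝ)
    (hu : ∀ lam : ℝ, 0 < lam → u lam ∈ Set.Ioo (0 : ℝ) 1 ∧ Bi b c (u lam) = lam * u lam) :
    ∃ u₀ ∈ Set.Icc (0 : ℝ) 1, Bi b c u₀ = 0 ∧
      (∀ s ∈ Set.Icc (0 : ℝ) 1, Bi b c s = 0 → u₀ ≤ s) ∧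
      (∀ lam₁ lam₂ : ℝ, 0 < lam₁ → lam₁ < lam₂ → u lam₂ ≤ u lam₁) ∧
      Filter.Tendsto u (nhdsWithin 0 (Set.Ioi 0)) (nhds u₀) ∧
      ((∑' j : ℕ, ENNReal.ofReal (((j : ℝ) + 1) * b (j + 2))) ≤
          ENNReal.ofReal ((c : ℝ) * b 0) → u₀ = 1) ∧
      (ENNReal.ofReal ((c : ℝ) * b 0) <
          (∑' j : ℕ, ENNReal.ofReal (((j : ℝ) + 1) * b (j + 2))) → u₀ < 1) := by
  have hcb : 0 < (c : ℝ) * b 0 := mul_pos (by exact_mod_cast hc) hb0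
  have hB0 : 0 < Bi b c 0 := Bi_zero (b := b) ▸ hcb
  have hcont := continuousOn_Bi (c := c) hbsum
  obtain ⟨u₀, hleast⟩ := exists_isLeast_zero hcont zero_le_one (Bi_one hbzero)
  have ⟨⟨hu₀, hroot⟩, hmin⟩ := hleast
  have hpos : ∀ s, 0 ≤ s → s < u₀ → 0 < Bi b c s :=
    fun s => pos_of_lt_of_isLeast_zero hleast hcont hB0
  have hu₀pos : 0 < u₀ := hu₀.1.lt_of_ne fun h => hB0.ne' (h ▸ hroot)
  have hu_mem : ∀ lam, 0 < lam → u lam ∈ Icc (0 : ℝ) 1 :=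
    fun lam h => Ioo_subset_Icc_self (hu lam h).1
  have hu_lt : ∀ lam, 0 < lam → u lam < u₀ := fun lam h =>
    lt_of_Bi_lt_mul hbsum hbnn hbzero h (hu lam h).1.2.le (hu lam h).2 hu₀
      (by rw [hroot]; exact mul_pos h hu₀pos)
  refine ⟨u₀, hu₀, hroot, fun s hs h => hmin ⟨hs, h⟩, fun l₁ l₂ h₁ h₁₂ => ?_, ?_,
    fun hle => ?_, fun hlt => ?_⟩
  · have h₂ := h₁.trans h₁₂
    refine (lt_of_mul_lt_Bi hbsum hbnn hbzero h₁ (hu_mem l₁ h₁) (hu l₁ h₁).2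
      (hu l₂ h₂).1.2.le ?_).le
    rw [(hu l₂ h₂).2]; nlinarith [(hu l₂ h₂).1.1]
  · refine tendsto_order.2 ⟨fun a ha => ?_, fun a ha =>
      eventually_nhdsWithin_of_forall fun lam h => (hu_lt lam h).trans ha⟩
    rcases lt_or_ge a 0 with ha0 | ha0
    · exact eventually_nhdsWithin_of_forall fun lam h => ha0.trans (hu lam h).1.1
    filter_upwards [Ioo_mem_nhdsGT (hpos a ha0 ha)] with lam hlam
    refine lt_of_mul_lt_Bi hbsum hbnn hbzero hlam.1 (hu_mem lam hlam.1) (hu lam hlam.1).2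
      (ha.le.trans hu₀.2) ?_
    nlinarith [hlam.1, hlam.2, hu₀.2]
  · by_contra hne
    exact (Bi_pos_of_tsum_le hbnn hbsum hbzero hcb hle hu₀.1 (hu₀.2.lt_of_ne hne)).ne' hroot
  · obtain ⟨s, hs, hneg⟩ := exists_Bi_neg_of_lt_tsum hbnn hbsum hbzero hcb hlt
    by_contra! h
    exact (hpos s hs.1.le (hs.2.trans_le h)).not_gt hneg

theorem stmt6 (c : ℕ) (hc : 1 ≤ c) (b : ℕ → ℝ)
    (hbnn : ∀ j : ℕ, j ≠ 1 → 0 ≤ b j) (hb0 : 0 < b 0)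
    (hbsum : Summable b) (hbzero : (∑' j : ℕ, b j) = 0)
    (hb2 : 0 < ∑' j : ℕ, b (j + 2))
    (u : ℝ → ℝ)
    (hu : ∀ lam : ℝ, 0 < lam → u lam ∈ Set.Ioo (0 : ℝ) 1 ∧ Bi b c (u lam) = lam * u lam) :
    ∃ u₀ ∈ Set.Icc (0 : ℝ) 1, Bi b c u₀ = 0 ∧
      (∀ s ∈ Set.Icc (0 : ℝ) 1, Bi b c s = 0 → u₀ ≤ s) ∧
      (∀ lam₁ lam₂ : ℝ, 0 < lam₁ → lam₁ < lam₂ → u lam₂ ≤ u lam₁) ∧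
      Filter.Tendsto u (nhdsWithin 0 (Set.Ioi 0)) (nhds u₀) ∧
      ((∑' j : ℕ, ENNReal.ofReal (((j : ℝ) + 1) * b (j + 2))) ≤
          ENNReal.ofReal ((c : ℝ) * b 0) → u₀ = 1) ∧
      (ENNReal.ofReal ((c : ℝ) * b 0) <
          (∑' j : ℕ, ENNReal.ofReal (((j : ℝ) + 1) * b (j + 2))) → u₀ < 1) :=
  stmt6_general c hc b hbnn hb0 hbsum hbzero u hu
end

section
/- For every s ∈ [0,1] the generating function Π(s) = ∑_{n=0}^∞ π_n s^n satisfies Π(s)·U_β(s) = π_0·[U_β(s) + s·(H(u(β)) − H(s))] + ∑_{k=1}^{c−1} π_k (c−k) b_0·[s^k (1−s) − s·u(β)^{k−1}(1 − u(β))], where U_β(s) = B_c(s) − β s and u(β) is the unique root of U_β in [0,1]. Equivalently, Π(s)·(B_c(s) − β s) = π_0·[B_c(s) + s·(h − H(s))] − β s + ∑_{k=1}^{c−1} π_k s^k (c−k) b_0 (1−s). -/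
/-!
Multiply the balance equation of level `n ≥ 1` by `s ^ (n + 1)` and sum over `n`. If the service
rate were `c b₀` at every level, the batch-arrival terms would form the Cauchy product of
`Π(s) - π₀` with `∑_{j ≥ 2} b_j s^j`, and the series would sum to
`π₀ s H(s) + (Π(s) - π₀) U_β(s) - c b₀ π₁ s`. At the levels `k < c` only `k` servers are busy;
the correction this causes telescopes to the finite sum
`b₀ ((1 - s) ∑ (c - k) π_k s^k - (c - 1) π₁ s)`.
Together with the level-0 equation this gives the second identity. At `s = u(β)` its left side
vanishes, so dividing by `u(β)` expresses `π₀ (β + h - H(u(β))) - β` as a finite sum; subtracting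
`s` times that relation gives the first identity.
-/

open Set Filter Topology

/-- The generating function `H(s) = ∑_{j≥1} h_j s^j`. -/
noncomputable def Hgen (hh : ℕ → ℝ) (s : ℝ) : ℝ :=
  ∑' j : ℕ, hh (j + 1) * s ^ (j + 1)

open Finset

theorem Summable.summable_norm_mul_pow {f : ℕ → ℝ} (hf : Summable f) {s : ℝ} (hs : |s| ≤ 1) :
    Summable fun n => ‖f n * s ^ n‖ :=
  hf.norm.of_nonneg_of_le (fun _ => norm_nonneg _) fun n => by
    rw [norm_mul, norm_pow, Real.norm_eq_abs s]
    exact mul_le_of_le_one_right (norm_nonneg _) (pow_le_one₀ (abs_nonneg s) hs)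

theorem sum_Icc_one_eq_sum_range {M : Type*} [AddCommMonoid M] (f : ℕ → M) (n : ℕ) :
    ∑ k ∈ Icc 1 n, f k = ∑ k ∈ range n, f (k + 1) := by
  rw [range_eq_Ico, sum_Ico_add' f 0 n 1, zero_add, Finset.Ico_add_one_right_eq_Icc]

theorem hasSum_add_two_sub_mul_add_one {w : ℕ → ℝ} {c : ℕ} (hw : ∀ k, c ≤ k → w k = 0)
    (s : ℝ) :
    HasSum (fun n => w (n + 2) - s * w (n + 1)) ((1 - s) * ∑ k ∈ Icc 1 (c - 1), w k - w 1) := by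
  have h1 : HasSum (fun n => w (n + 1)) (∑ k ∈ Icc 1 (c - 1), w k) := by
    rw [sum_Icc_one_eq_sum_range]
    exact hasSum_sum_of_ne_finset_zero fun n hn => hw _ (by rw [Finset.mem_range] at hn; omega)
  have h2 := (hasSum_nat_add_iff' 1).mpr h1
  simp only [range_one, sum_singleton] at h2
  convert! h2.sub (h1.mul_left s) using 1
  ring

-- The level-`n` balance expression with all `c` servers working; for `n ≥ c` it is the actual one.
noncomputable def balanceResidual (c : ℕ) (b hh π : ℕ → ℝ) (β : ℝ) (n : ℕ) : ℝ :=
  hh n * π 0 + (∑ k ∈ Icc 1 (n - 1), b (n - k + 1) * π k) +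
    (b 1 - ((c : ℝ) - 1) * b 0 - β) * π n + (c : ℝ) * b 0 * π (n + 1)

-- `c - n : ℕ` truncates to the number of idle servers at level `n`.
theorem balanceResidual_eq {c : ℕ} {b hh π : ℕ → ℝ} {β : ℝ}
    (heqmid : ∀ n : ℕ, 1 ≤ n → n ≤ c - 1 →
      hh n * π 0 + (∑ k ∈ Icc 1 (n - 1), b (n - k + 1) * π k) +
        (b 1 - ((n : ℝ) - 1) * b 0 - β) * π n + ((n : ℝ) + 1) * b 0 * π (n + 1) = 0)
    (heqtail : ∀ n : ℕ, c ≤ n → balanceResidual c b hh π β n = 0)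
    {n : ℕ} (hn : 1 ≤ n) :
    balanceResidual c b hh π β n = b 0 * ((c - (n + 1) : ℕ) * π (n + 1) - (c - n : ℕ) * π n) := by
  rcases le_or_gt c n with hcn | hnc
  · simp [heqtail n hcn, Nat.sub_eq_zero_of_le hcn, Nat.sub_eq_zero_of_le (hcn.trans n.le_succ)]
  · push_cast [Nat.cast_sub hnc.le, Nat.cast_sub (show n + 1 ≤ c from hnc)]
    unfold balanceResidual
    linear_combination heqmid n hn (by omega)

theorem hasSum_sum_Icc_mul_pow {b π : ℕ → ℝ} (hb : Summable b) (hπ : Summable π) {s : ℝ}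
    (hs : |s| ≤ 1) :
    HasSum (fun n => (∑ k ∈ Icc 1 n, b (n + 1 - k + 1) * π k) * s ^ (n + 2))
      ((∑' n, π (n + 1) * s ^ (n + 1)) * ∑' n, b (n + 2) * s ^ (n + 2)) := by
  have hconv := hasSum_sum_range_mul_of_summable_norm
    ((summable_nat_add_iff (f := fun n => ‖π n * s ^ n‖) 1).mpr (hπ.summable_norm_mul_pow hs))
    ((summable_nat_add_iff (f := fun n => ‖b n * s ^ n‖) 2).mpr (hb.summable_norm_mul_pow hs))
  rw [← hasSum_nat_add_iff' 1]
  simp only [range_one, sum_singleton, Finset.Icc_eq_empty_of_lt one_pos, sum_empty, zero_mul,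
    sub_zero]
  refine hconv.congr_fun fun n => ?_
  rw [sum_Icc_one_eq_sum_range, sum_mul]
  refine sum_congr rfl fun k hk => ?_
  have hkn : k ≤ n := Nat.lt_succ_iff.mp (mem_range.mp hk)
  rw [show n + 1 + 1 - (k + 1) + 1 = n - k + 2 by omega,
    show n + 1 + 2 = (k + 1) + (n - k + 2) by omega, pow_add]
  ring

theorem hasSum_balanceResidual_mul_pow (c : ℕ) {b hh π : ℕ → ℝ} (β : ℝ) (hb : Summable b)
    (hh_sum : Summable hh) (hπ : Summable π) {s : ℝ} (hs : |s| ≤ 1) :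
    HasSum (fun n => balanceResidual c b hh π β (n + 1) * s ^ (n + 2))
      (π 0 * s * Hgen hh s + ((∑' n, π n * s ^ n) - π 0) * (Bi b c s - β * s) -
        c * b 0 * π 1 * s) := by
  have hP := (hπ.summable_norm_mul_pow hs).of_norm.hasSum
  have hB := (hb.summable_norm_mul_pow hs).of_norm.hasSum
  have hP1 := (hasSum_nat_add_iff' 1).mpr hP
  have hP2 := (hasSum_nat_add_iff' 2).mpr hP
  have hB2 := (hasSum_nat_add_iff' 2).mpr hB
  have hH : HasSum (fun n => hh (n + 1) * s ^ (n + 1)) (Hgen hh s) :=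
    ((hasSum_nat_add_iff' 1).mpr (hh_sum.summable_norm_mul_pow hs).of_norm.hasSum).summable.hasSum
  have hconv := hasSum_sum_Icc_mul_pow hb hπ hs
  simp only [range_one, sum_singleton, Finset.sum_range_succ, pow_zero, pow_one, mul_one]
    at hP1 hP2 hB2
  rw [hP1.tsum_eq, hB2.tsum_eq] at hconv
  convert! (((hH.mul_left (π 0 * s)).add hconv).add
    (hP1.mul_left ((b 1 - ((c : ℝ) - 1) * b 0 - β) * s))).add (hP2.mul_left (c * b 0)) using 1
  · funext n
    simp only [balanceResidual, Nat.add_sub_cancel]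
    ring
  · unfold Bi
    ring

theorem tsum_mul_pow_mul_kernel_eq {c : ℕ} (hc : 1 ≤ c) {b hh π : ℕ → ℝ} {β : ℝ}
    (hb : Summable b) (hh_sum : Summable hh) (hπ : Summable π)
    (heq0 : -((∑' j : ℕ, hh (j + 1)) + β) * π 0 + b 0 * π 1 + β = 0)
    (heqmid : ∀ n : ℕ, 1 ≤ n → n ≤ c - 1 →
      hh n * π 0 + (∑ k ∈ Icc 1 (n - 1), b (n - k + 1) * π k) +
        (b 1 - ((n : ℝ) - 1) * b 0 - β) * π n + ((n : ℝ) + 1) * b 0 * π (n + 1) = 0)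
    (heqtail : ∀ n : ℕ, c ≤ n → balanceResidual c b hh π β n = 0)
    {s : ℝ} (hs : |s| ≤ 1) :
    (∑' n : ℕ, π n * s ^ n) * (Bi b c s - β * s) =
      π 0 * (Bi b c s + s * ((∑' j : ℕ, hh (j + 1)) - Hgen hh s)) - β * s +
        ∑ k ∈ Icc 1 (c - 1), π k * s ^ k * ((c : ℝ) - (k : ℝ)) * b 0 * (1 - s) := by
  set w : ℕ → ℝ := fun k => ((c - k : ℕ) : ℝ) * π k * s ^ k with hw_def
  have hw : ∀ k, c ≤ k → w k = 0 := fun k hk => by simp [hw_def, Nat.sub_eq_zero_of_le hk]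
  have hdeficit : HasSum (fun n => balanceResidual c b hh π β (n + 1) * s ^ (n + 2))
      (b 0 * ((1 - s) * ∑ k ∈ Icc 1 (c - 1), w k - w 1)) := by
    refine ((hasSum_add_two_sub_mul_add_one hw s).mul_left (b 0)).congr_fun fun n => ?_
    rw [balanceResidual_eq heqmid heqtail (Nat.le_add_left 1 n)]
    simp only [hw_def]
    ring
  have hgen := (hasSum_balanceResidual_mul_pow c β hb hh_sum hπ hs).unique hdeficit
  have hG : ∑ k ∈ Icc 1 (c - 1), π k * s ^ k * ((c : ℝ) - (k : ℝ)) * b 0 * (1 - s) =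
      b 0 * (1 - s) * ∑ k ∈ Icc 1 (c - 1), w k := by
    rw [mul_sum]
    refine sum_congr rfl fun k hk => ?_
    have hkc : k ≤ c := (Finset.mem_Icc.mp hk).2.trans (Nat.sub_le c 1)
    simp only [hw_def, Nat.cast_sub hkc]
    ring
  have hw1 : w 1 = ((c : ℝ) - 1) * π 1 * s := by simp [hw_def, Nat.cast_sub hc]
  rw [hG]
  rw [hw1] at hgen
  linear_combination hgen + s * heq0

theorem kernel_root_relation {c : ℕ} {b hh π : ℕ → ℝ} {β u : ℝ} (hu : u ≠ 0)
    (hroot : Bi b c u = β * u)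
    (hkey : (∑' n : ℕ, π n * u ^ n) * (Bi b c u - β * u) =
      π 0 * (Bi b c u + u * ((∑' j : ℕ, hh (j + 1)) - Hgen hh u)) - β * u +
        ∑ k ∈ Icc 1 (c - 1), π k * u ^ k * ((c : ℝ) - (k : ℝ)) * b 0 * (1 - u)) :
    π 0 * (β + ((∑' j : ℕ, hh (j + 1)) - Hgen hh u)) - β +
      ∑ k ∈ Icc 1 (c - 1), π k * ((c : ℝ) - (k : ℝ)) * b 0 * (u ^ (k - 1) * (1 - u)) = 0 := by
  have hsum : ∑ k ∈ Icc 1 (c - 1), π k * u ^ k * ((c : ℝ) - (k : ℝ)) * b 0 * (1 - u) =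
      u * ∑ k ∈ Icc 1 (c - 1), π k * ((c : ℝ) - (k : ℝ)) * b 0 * (u ^ (k - 1) * (1 - u)) := by
    rw [mul_sum]
    refine sum_congr rfl fun k hk => ?_
    rw [← Nat.sub_add_cancel (Finset.mem_Icc.mp hk).1, pow_succ, Nat.add_sub_cancel]
    ring
  rw [hroot, sub_self, mul_zero, hsum] at hkey
  refine mul_left_cancel₀ hu ?_
  linear_combination -hkey

theorem stmt15_general (c : ℕ) (hc : 1 ≤ c) (b : ℕ → ℝ)
    (hbsum : Summable b)
    (hh : ℕ → ℝ)
    (hhsum : Summable (fun j : ℕ => hh (j + 1)))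
    (β : ℝ)
    (π : ℕ → ℝ) (hπsum : Summable π)
    (heq0 : -((∑' j : ℕ, hh (j + 1)) + β) * π 0 + b 0 * π 1 + β = 0)
    (heqmid : ∀ n : ℕ, 1 ≤ n → n ≤ c - 1 →
      hh n * π 0 + (∑ k ∈ Finset.Icc 1 (n - 1), b (n - k + 1) * π k) +
        (b 1 - ((n : ℝ) - 1) * b 0 - β) * π n + ((n : ℝ) + 1) * b 0 * π (n + 1) = 0)
    (heqtail : ∀ n : ℕ, c ≤ n →
      hh n * π 0 + (∑ k ∈ Finset.Icc 1 (n - 1), b (n - k + 1) * π k) +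
        (b 1 - ((c : ℝ) - 1) * b 0 - β) * π n + (c : ℝ) * b 0 * π (n + 1) = 0)
    (uβ : ℝ) (huβ : uβ ∈ Set.Ioo (0 : ℝ) 1) (huβroot : Bi b c uβ = β * uβ) :
    ∀ s ∈ Set.Icc (0 : ℝ) 1,
      (∑' n : ℕ, π n * s ^ n) * (Bi b c s - β * s) =
        π 0 * ((Bi b c s - β * s) + s * (Hgen hh uβ - Hgen hh s)) +
          (∑ k ∈ Finset.Icc 1 (c - 1),
            π k * ((c : ℝ) - (k : ℝ)) * b 0 *
              (s ^ k * (1 - s) - s * uβ ^ (k - 1) * (1 - uβ))) ∧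
      (∑' n : ℕ, π n * s ^ n) * (Bi b c s - β * s) =
        π 0 * (Bi b c s + s * ((∑' j : ℕ, hh (j + 1)) - Hgen hh s)) - β * s +
          ∑ k ∈ Finset.Icc 1 (c - 1),
            π k * s ^ k * ((c : ℝ) - (k : ℝ)) * b 0 * (1 - s) := by
  have key {t : ℝ} (ht : t ∈ Set.Icc (0 : ℝ) 1) :=
    tsum_mul_pow_mul_kernel_eq hc hbsum ((summable_nat_add_iff 1).mp hhsum) hπsum heq0 heqmid
      heqtail (abs_le.mpr ⟨by linarith [ht.1], ht.2⟩)
  have hroot := kernel_root_relation huβ.1.ne' huβroot (key (Set.Ioo_subset_Icc_self huβ))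
  intro s hs
  refine ⟨?_, key hs⟩
  have hsplit : ∑ k ∈ Icc 1 (c - 1), π k * ((c : ℝ) - (k : ℝ)) * b 0 *
        (s ^ k * (1 - s) - s * uβ ^ (k - 1) * (1 - uβ)) =
      ∑ k ∈ Icc 1 (c - 1), π k * s ^ k * ((c : ℝ) - (k : ℝ)) * b 0 * (1 - s) -
        s * ∑ k ∈ Icc 1 (c - 1), π k * ((c : ℝ) - (k : ℝ)) * b 0 * (uβ ^ (k - 1) * (1 - uβ)) := by
    rw [mul_sum, ← sum_sub_distrib]
    exact sum_congr rfl fun k _ => by ring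
  rw [hsplit]
  linear_combination key hs + s * hroot

theorem stmt15 (c : ℕ) (hc : 1 ≤ c) (b : ℕ → ℝ)
    (hbnn : ∀ j : ℕ, j ≠ 1 → 0 ≤ b j) (hb0 : 0 < b 0)
    (hbsum : Summable b) (hbzero : (∑' j : ℕ, b j) = 0)
    (hb2 : 0 < ∑' j : ℕ, b (j + 2))
    (hh : ℕ → ℝ) (hhnn : ∀ j : ℕ, 0 ≤ hh (j + 1))
    (hhsum : Summable (fun j : ℕ => hh (j + 1)))
    (hhpos : 0 < ∑' j : ℕ, hh (j + 1))
    (β : ℝ) (hβ : 0 < β)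
    (π : ℕ → ℝ) (hπnn : ∀ n : ℕ, 0 ≤ π n) (hπsum : Summable π)
    (hπ1 : (∑' n : ℕ, π n) = 1)
    (heq0 : -((∑' j : ℕ, hh (j + 1)) + β) * π 0 + b 0 * π 1 + β = 0)
    (heqmid : ∀ n : ℕ, 1 ≤ n → n ≤ c - 1 →
      hh n * π 0 + (∑ k ∈ Finset.Icc 1 (n - 1), b (n - k + 1) * π k) +
        (b 1 - ((n : ℝ) - 1) * b 0 - β) * π n + ((n : ℝ) + 1) * b 0 * π (n + 1) = 0)
    (heqtail : ∀ n : ℕ, c ≤ n →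
      hh n * π 0 + (∑ k ∈ Finset.Icc 1 (n - 1), b (n - k + 1) * π k) +
        (b 1 - ((c : ℝ) - 1) * b 0 - β) * π n + (c : ℝ) * b 0 * π (n + 1) = 0)
    (uβ : ℝ) (huβ : uβ ∈ Set.Ioo (0 : ℝ) 1) (huβroot : Bi b c uβ = β * uβ) :
    ∀ s ∈ Set.Icc (0 : ℝ) 1,
      (∑' n : ℕ, π n * s ^ n) * (Bi b c s - β * s) =
        π 0 * ((Bi b c s - β * s) + s * (Hgen hh uβ - Hgen hh s)) +
          (∑ k ∈ Finset.Icc 1 (c - 1),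
            π k * ((c : ℝ) - (k : ℝ)) * b 0 *
              (s ^ k * (1 - s) - s * uβ ^ (k - 1) * (1 - uβ))) ∧
      (∑' n : ℕ, π n * s ^ n) * (Bi b c s - β * s) =
        π 0 * (Bi b c s + s * ((∑' j : ℕ, hh (j + 1)) - Hgen hh s)) - β * s +
          ∑ k ∈ Finset.Icc 1 (c - 1),
            π k * s ^ k * ((c : ℝ) - (k : ℝ)) * b 0 * (1 - s) :=
  stmt15_general c hc b hbsum hh hhsum β π hπsum heq0 heqmid heqtail uβ huβ huβroot
end
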